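/- arXiv:2107.07176 — 2 statements merged into one kernel-verified Lean document; each statement's English description precedes it below -/
import Mathlib

section
/- (Main theorem, T-asymptotic regularity under (C1_q)) In the Tikhonov-Mann setting, assume: σ₁ : ℕ → ℕ is a rate of divergence for ∑ (1−β_n); σ₃ is a Cauchy modulus for ∑ |β_{n+1}−β_n|; σ₄ is a Cauchy modulus for ∑ |λ_{n+1}−λ_n|; K ∈ ℕ satisfies K ≥ M; σ₅ : ℕ → ℕ is a rate of convergence of (β_n) towards 1; Λ ∈ ℕ, Λ ≥ 1, and N_Λ ∈ ℕ are such that λ_n ≥ 1/Λ for all n ≥ N_Λ. Define χ(k) = max{σ₃(8K(k+1)−1), σ₄(8K(k+1)−1)} and Σ(k) = σ₁(χ(3k+2) + 2 + ⌈ln(6K(k+1))⌉) + 1. Then Φ(k) = max{N_Λ, Σ(2Λ(k+1)−1), σ₅(4KΛ(k+1)−1)} is a rate of T-asymptotic regularity for (x_n), i.e., d(x_n,Tx_n) ≤ 1/(k+1) for all k ∈ ℕ and all n ≥ Φ(k). -/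
/-- A `W`-hyperbolic space: a metric space together with a convexity mapping
`W x y l` (written `(1-l)x + l y` in the paper) satisfying (W1)-(W4). -/
structure WHyp (X : Type*) [MetricSpace X] where
  W : X → X → ℝ → X
  W1 : ∀ x y z : X, ∀ l ∈ Set.Icc (0:ℝ) 1,
    dist z (W x y l) ≤ (1 - l) * dist z x + l * dist z y
  W2 : ∀ x y : X, ∀ l ∈ Set.Icc (0:ℝ) 1, ∀ l' ∈ Set.Icc (0:ℝ) 1,
    dist (W x y l) (W x y l') = |l - l'| * dist x y
  W3 : ∀ x y : X, ∀ l ∈ Set.Icc (0:ℝ) 1, W x y l = W y x (1 - l)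
  W4 : ∀ x y z w : X, ∀ l ∈ Set.Icc (0:ℝ) 1,
    dist (W x z l) (W y w l) ≤ (1 - l) * dist x y + l * dist z w

/-!
Along the iteration, `a_n = d(x_{n+1}, x_n)` obeys the Xu-type recurrence
`a_{n+1} ≤ β_n a_n + 2K (|β_{n+1} - β_n| + |λ_{n+1} - λ_n|)`. Unrolled from an index past which
both perturbation series have tails below `1/(24K(k+1))`, it bounds `a_n` by
`exp(-∑ (1 - β_i)) · 2K` plus these tails, and the rate of divergence makes the exponential at
most `1/(6K(k+1))`. Finally `λ_n d(x_n, T x_n) ≤ a_n + d(x_n, y_n)`, where `λ_n ≥ 1/Λ` and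
`d(x_n, y_n) = (1 - β_n) d(u, x_n) ≤ 2K (1 - β_n)` is small once `β_n` is close to `1`.
-/

open Finset Real

namespace WHyp

variable {X : Type*} [MetricSpace X] (H : WHyp X) {a b : X} {l : ℝ}

theorem W_zero (a b : X) : H.W a b 0 = a := by
  have h := H.W1 a b a 0 ⟨le_rfl, zero_le_one⟩
  simp only [sub_zero, one_mul, zero_mul, dist_self, add_zero] at h
  exact (dist_le_zero.1 h).symm

theorem W_one (a b : X) : H.W a b 1 = b := by
  have h := H.W1 a b b 1 ⟨zero_le_one, le_rfl⟩
  simp only [sub_self, zero_mul, one_mul, dist_self, zero_add] at h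
  exact (dist_le_zero.1 h).symm

theorem dist_W_left (hl : l ∈ Set.Icc (0 : ℝ) 1) : dist (H.W a b l) a = l * dist a b := by
  simpa [W_zero, abs_of_nonneg hl.1] using H.W2 a b l hl 0 ⟨le_rfl, zero_le_one⟩

theorem dist_W_right (hl : l ∈ Set.Icc (0 : ℝ) 1) :
    dist (H.W a b l) b = (1 - l) * dist a b := by
  simpa [W_one, abs_of_nonpos (sub_nonpos.2 hl.2)] using H.W2 a b l hl 1 ⟨zero_le_one, le_rfl⟩

theorem dist_W_le {z : X} {r : ℝ} (hl : l ∈ Set.Icc (0 : ℝ) 1) (ha : dist a z ≤ r)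
    (hb : dist b z ≤ r) : dist (H.W a b l) z ≤ r := by
  rw [dist_comm] at ha hb ⊢
  calc dist z (H.W a b l) ≤ (1 - l) * dist z a + l * dist z b := H.W1 a b z l hl
    _ ≤ (1 - l) * r + l * r := by gcongr <;> linarith [hl.2, hl.1]
    _ = r := by ring

theorem dist_W_W_le {a' b' : X} {l' : ℝ} (hl : l ∈ Set.Icc (0 : ℝ) 1)
    (hl' : l' ∈ Set.Icc (0 : ℝ) 1) :
    dist (H.W a b l) (H.W a' b' l') ≤
      |l - l'| * dist a b + ((1 - l') * dist a a' + l' * dist b b') :=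
  calc dist (H.W a b l) (H.W a' b' l')
      ≤ dist (H.W a b l) (H.W a b l') + dist (H.W a b l') (H.W a' b' l') := dist_triangle _ _ _
    _ ≤ _ := by
      rw [H.W2 a b l hl l' hl']
      gcongr
      exact H.W4 a a' b b' l' hl'

end WHyp

section Sequences

variable {a b c d e f : ℕ → ℝ}

theorem le_prod_mul_add_sum_of_le_mul_add (hb : ∀ n, b n ∈ Set.Icc (0 : ℝ) 1)
    (he : ∀ n, 0 ≤ e n) (hrec : ∀ n, a (n + 1) ≤ b n * a n + e n) {N n : ℕ} (hNn : N ≤ n) :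
    a n ≤ (∏ i ∈ Ico N n, b i) * a N + ∑ i ∈ Ico N n, e i := by
  induction n, hNn using Nat.le_induction with
  | base => simp
  | succ n hNn ih =>
    rw [prod_Ico_succ_top hNn, sum_Ico_succ_top hNn]
    have hS : 0 ≤ ∑ i ∈ Ico N n, e i := sum_nonneg fun i _ ↦ he i
    calc a (n + 1) ≤ b n * a n + e n := hrec n
      _ ≤ b n * ((∏ i ∈ Ico N n, b i) * a N + ∑ i ∈ Ico N n, e i) + e n := by
        gcongr
        exact (hb n).1
      _ ≤ (∏ i ∈ Ico N n, b i) * b n * a N + (∑ i ∈ Ico N n, e i + e n) := by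
        linarith [mul_le_of_le_one_left hS (hb n).2]

theorem prod_le_exp_neg_sum_one_sub {ι : Type*} (s : Finset ι) {g : ι → ℝ}
    (hg : ∀ i ∈ s, 0 ≤ g i) : ∏ i ∈ s, g i ≤ exp (-∑ i ∈ s, (1 - g i)) :=
  calc ∏ i ∈ s, g i ≤ ∏ i ∈ s, exp (g i - 1) :=
        prod_le_prod hg fun i _ ↦ by linarith [add_one_le_exp (g i - 1)]
    _ = exp (-∑ i ∈ s, (1 - g i)) := by
      rw [← exp_sum, ← sum_neg_distrib]
      simp only [neg_sub]

def IsRateOfDivergence (f : ℕ → ℝ) (σ : ℕ → ℕ) : Prop :=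
  ∀ n : ℕ, (n : ℝ) ≤ ∑ i ∈ range (σ n + 1), f i

def IsCauchyModulus (f : ℕ → ℝ) (σ : ℕ → ℕ) : Prop :=
  ∀ k : ℕ, ∀ n ≥ σ k, ∀ q : ℕ, ∑ i ∈ Icc (n + 1) (n + q), f i ≤ 1 / (k + 1)

theorem IsRateOfDivergence.le_add_one {σ : ℕ → ℕ} (h : IsRateOfDivergence f σ)
    (hf : ∀ i, f i ≤ 1) (n : ℕ) : n ≤ σ n + 1 := by
  have : ∑ i ∈ range (σ n + 1), f i ≤ σ n + 1 :=
    (sum_le_sum fun i _ ↦ hf i).trans (by simp)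
  exact_mod_cast (h n).trans this

theorem IsRateOfDivergence.le_sum_Ico {σ : ℕ → ℕ} (h : IsRateOfDivergence f σ)
    (hf : ∀ i, f i ∈ Set.Icc (0 : ℝ) 1) {N D n : ℕ} (hn : σ (N + D) + 1 ≤ n) :
    (D : ℝ) ≤ ∑ i ∈ Ico N n, f i := by
  have hNn : N ≤ n := by have := h.le_add_one (fun i ↦ (hf i).2) (N + D); omega
  have hn' : ((N + D : ℕ) : ℝ) ≤ ∑ i ∈ range n, f i :=
    (h (N + D)).trans <| sum_le_sum_of_subset_of_nonneg (range_subset_range.2 hn)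
      fun i _ _ ↦ (hf i).1
  have hN : ∑ i ∈ range N, f i ≤ N := (sum_le_sum fun i _ ↦ (hf i).2).trans (by simp)
  rw [sum_Ico_eq_sub _ hNn]
  push_cast at hn'
  linarith

theorem IsCauchyModulus.sum_Ico_le {σ : ℕ → ℕ} (h : IsCauchyModulus f σ) (hf : ∀ i, 0 ≤ f i)
    {k m : ℕ} (hm : σ k ≤ m) (n : ℕ) : ∑ i ∈ Ico (m + 1) n, f i ≤ 1 / (k + 1) :=
  (sum_le_sum_of_subset_of_nonneg (fun i ↦ by simp only [mem_Ico, mem_Icc]; omega)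
    fun i _ _ ↦ hf i).trans (h k m hm (n - (m + 1)))

theorem IsRateOfDivergence.prod_Ico_le_inv {σ : ℕ → ℕ}
    (h : IsRateOfDivergence (fun n ↦ 1 - b n) σ) (hb : ∀ n, b n ∈ Set.Icc (0 : ℝ) 1) {L : ℝ}
    (hL : 0 < L) {N D n : ℕ} (hD : Real.log L ≤ D) (hn : σ (N + D) + 1 ≤ n) :
    ∏ i ∈ Ico N n, b i ≤ L⁻¹ :=
  calc ∏ i ∈ Ico N n, b i ≤ exp (-∑ i ∈ Ico N n, (1 - b i)) :=
        prod_le_exp_neg_sum_one_sub _ fun i _ ↦ (hb i).1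
    _ ≤ exp (-Real.log L) := by
        gcongr
        exact hD.trans (h.le_sum_Ico (fun i ↦ ⟨by linarith [(hb i).2], by linarith [(hb i).1]⟩) hn)
    _ = L⁻¹ := by rw [exp_neg, exp_log hL]

/-- The paper's `χ`. -/
def perturbationModulus (K : ℕ) (σ₃ σ₄ : ℕ → ℕ) (k : ℕ) : ℕ :=
  max (σ₃ (8 * K * (k + 1) - 1)) (σ₄ (8 * K * (k + 1) - 1))

/-- The paper's `Σ`. -/
noncomputable def asymptoticRegularityRate (K : ℕ) (σ₁ σ₃ σ₄ : ℕ → ℕ) (k : ℕ) : ℕ :=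
  σ₁ (perturbationModulus K σ₃ σ₄ (3 * k + 2) + 2 + ⌈Real.log (6 * K * (k + 1))⌉₊) + 1

theorem cast_sub_one_add_one {m : ℕ} (hm : 0 < m) : ((m - 1 : ℕ) : ℝ) + 1 = m := by
  rw [Nat.cast_pred hm, sub_add_cancel]

theorem le_of_asymptoticRegularityRate_le {K : ℕ} {σ₁ σ₃ σ₄ : ℕ → ℕ} (hK : 0 < K)
    (hb : ∀ n, b n ∈ Set.Icc (0 : ℝ) 1) (hc : ∀ n, 0 ≤ c n) (hd : ∀ n, 0 ≤ d n)
    (ha : ∀ n, a n ≤ 2 * K) (hrec : ∀ n, a (n + 1) ≤ b n * a n + 2 * K * (c n + d n))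
    (hσ₁ : IsRateOfDivergence (fun n ↦ 1 - b n) σ₁) (hσ₃ : IsCauchyModulus c σ₃)
    (hσ₄ : IsCauchyModulus d σ₄) {k n : ℕ} (hn : asymptoticRegularityRate K σ₁ σ₃ σ₄ k ≤ n) :
    a n ≤ 1 / (k + 1) := by
  set N := perturbationModulus K σ₃ σ₄ (3 * k + 2)
  set D := ⌈Real.log (6 * K * (k + 1))⌉₊
  have hn' : σ₁ (N + 1 + (D + 1)) + 1 ≤ n := by
    rwa [show N + 1 + (D + 1) = N + 2 + D by omega]
  have hNn : N + 1 ≤ n := by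
    have := hσ₁.le_add_one (fun i ↦ by linarith [(hb i).1]) (N + 1 + (D + 1))
    omega
  have hD : Real.log (6 * K * (k + 1)) ≤ ((D + 1 : ℕ) : ℝ) := by
    push_cast
    linarith [Nat.le_ceil (Real.log (6 * K * (k + 1)))]
  have hprod : ∏ i ∈ Ico (N + 1) n, b i ≤ (6 * (K : ℝ) * (k + 1))⁻¹ :=
    hσ₁.prod_Ico_le_inv hb (by positivity) hD hn'
  have hm : ((8 * K * (3 * k + 3) - 1 : ℕ) : ℝ) + 1 = 24 * K * (k + 1) := by
    rw [cast_sub_one_add_one (by positivity)]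
    push_cast
    ring
  have hc' := hσ₃.sum_Ico_le (k := 8 * K * (3 * k + 3) - 1) (m := N) hc (le_max_left _ _) n
  have hd' := hσ₄.sum_Ico_le (k := 8 * K * (3 * k + 3) - 1) (m := N) hd (le_max_right _ _) n
  rw [hm] at hc' hd'
  have hsum : ∑ i ∈ Ico (N + 1) n, 2 * K * (c i + d i) ≤ 1 / (6 * (k + 1)) :=
    calc ∑ i ∈ Ico (N + 1) n, 2 * K * (c i + d i)
        = 2 * K * (∑ i ∈ Ico (N + 1) n, c i + ∑ i ∈ Ico (N + 1) n, d i) := by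
          rw [← sum_add_distrib, mul_sum]
      _ ≤ 2 * K * (1 / (24 * K * (k + 1)) + 1 / (24 * K * (k + 1))) := by gcongr
      _ = 1 / (6 * (k + 1)) := by field_simp; ring
  have hP : 0 ≤ ∏ i ∈ Ico (N + 1) n, b i := prod_nonneg fun i _ ↦ (hb i).1
  calc a n ≤ (∏ i ∈ Ico (N + 1) n, b i) * a (N + 1) + ∑ i ∈ Ico (N + 1) n, 2 * K * (c i + d i) :=
        le_prod_mul_add_sum_of_le_mul_add hb (fun i ↦ by have := hc i; have := hd i; positivity)
          hrec hNn
    _ ≤ (∏ i ∈ Ico (N + 1) n, b i) * (2 * K) + 1 / (6 * (k + 1)) := by gcongr; exact ha _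
    _ ≤ (6 * (K : ℝ) * (k + 1))⁻¹ * (2 * K) + 1 / (6 * (k + 1)) := by gcongr
    _ = 1 / (2 * (k + 1)) := by field_simp; ring
    _ ≤ 1 / (k + 1) := by gcongr; linarith

end Sequences

structure IsTikhonovMann {X : Type*} [MetricSpace X] (H : WHyp X) (C : Set X) (T : X → X)
    (p u : X) (lam beta : ℕ → ℝ) (x y : ℕ → X) : Prop where
  convex : ∀ a ∈ C, ∀ b ∈ C, ∀ l ∈ Set.Icc (0 : ℝ) 1, H.W a b l ∈ C
  mapsTo : ∀ a ∈ C, T a ∈ C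
  nonexpansive : ∀ a ∈ C, ∀ b ∈ C, dist (T a) (T b) ≤ dist a b
  fixedPoint_mem : p ∈ C
  isFixedPt : T p = p
  anchor_mem : u ∈ C
  lam_mem : ∀ n, lam n ∈ Set.Icc (0 : ℝ) 1
  beta_mem : ∀ n, beta n ∈ Set.Icc (0 : ℝ) 1
  x_zero_mem : x 0 ∈ C
  y_eq : ∀ n, y n = H.W u (x n) (beta n)
  x_succ : ∀ n, x (n + 1) = H.W (y n) (T (y n)) (lam n)

namespace IsTikhonovMann

variable {X : Type*} [MetricSpace X] {H : WHyp X} {C : Set X} {T : X → X} {p u : X}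
  {lam beta : ℕ → ℝ} {x y : ℕ → X} {r : ℝ}

theorem x_mem (h : IsTikhonovMann H C T p u lam beta x y) : ∀ n, x n ∈ C
  | 0 => h.x_zero_mem
  | n + 1 => by
    have hy : y n ∈ C := h.y_eq n ▸ h.convex _ h.anchor_mem _ (h.x_mem n) _ (h.beta_mem n)
    exact h.x_succ n ▸ h.convex _ hy _ (h.mapsTo _ hy) _ (h.lam_mem n)

theorem y_mem (h : IsTikhonovMann H C T p u lam beta x y) (n : ℕ) : y n ∈ C :=
  h.y_eq n ▸ h.convex _ h.anchor_mem _ (h.x_mem n) _ (h.beta_mem n)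

theorem dist_T_le (h : IsTikhonovMann H C T p u lam beta x y) {z : X} (hz : z ∈ C) :
    dist (T z) p ≤ dist z p := by
  simpa only [h.isFixedPt] using h.nonexpansive z hz p h.fixedPoint_mem

theorem dist_y_le (h : IsTikhonovMann H C T p u lam beta x y) (hu : dist u p ≤ r) {n : ℕ}
    (hx : dist (x n) p ≤ r) : dist (y n) p ≤ r :=
  h.y_eq n ▸ H.dist_W_le (h.beta_mem n) hu hx

theorem dist_x_le (h : IsTikhonovMann H C T p u lam beta x y) (hx0 : dist (x 0) p ≤ r)
    (hu : dist u p ≤ r) : ∀ n, dist (x n) p ≤ r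
  | 0 => hx0
  | n + 1 => by
    have hy := h.dist_y_le hu (h.dist_x_le hx0 hu n)
    rw [h.x_succ n]
    exact H.dist_W_le (h.lam_mem n) hy ((h.dist_T_le (h.y_mem n)).trans hy)

theorem dist_u_x_le (h : IsTikhonovMann H C T p u lam beta x y) (hx0 : dist (x 0) p ≤ r)
    (hu : dist u p ≤ r) (n : ℕ) : dist u (x n) ≤ 2 * r :=
  (dist_triangle_right u (x n) p).trans (by linarith [h.dist_x_le hx0 hu n])

theorem dist_x_x_le (h : IsTikhonovMann H C T p u lam beta x y) (hx0 : dist (x 0) p ≤ r)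
    (hu : dist u p ≤ r) (m n : ℕ) : dist (x m) (x n) ≤ 2 * r :=
  (dist_triangle_right (x m) (x n) p).trans
    (by linarith [h.dist_x_le hx0 hu m, h.dist_x_le hx0 hu n])

theorem dist_y_T_le (h : IsTikhonovMann H C T p u lam beta x y) (hx0 : dist (x 0) p ≤ r)
    (hu : dist u p ≤ r) (n : ℕ) : dist (y n) (T (y n)) ≤ 2 * r := by
  have hy := h.dist_y_le hu (h.dist_x_le hx0 hu n)
  linarith [dist_triangle_right (y n) (T (y n)) p, h.dist_T_le (h.y_mem n)]

theorem dist_x_y (h : IsTikhonovMann H C T p u lam beta x y) (n : ℕ) :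
    dist (x n) (y n) = (1 - beta n) * dist u (x n) := by
  rw [dist_comm, h.y_eq n, H.dist_W_right (h.beta_mem n)]

theorem dist_x_y_le (h : IsTikhonovMann H C T p u lam beta x y) (hx0 : dist (x 0) p ≤ r)
    (hu : dist u p ≤ r) (n : ℕ) : dist (x n) (y n) ≤ |beta n - 1| * (2 * r) := by
  rw [h.dist_x_y, abs_sub_comm, abs_of_nonneg (sub_nonneg.2 (h.beta_mem n).2)]
  exact mul_le_mul_of_nonneg_left (h.dist_u_x_le hx0 hu n) (sub_nonneg.2 (h.beta_mem n).2)

theorem dist_x_succ_y (h : IsTikhonovMann H C T p u lam beta x y) (n : ℕ) :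
    dist (x (n + 1)) (y n) = lam n * dist (y n) (T (y n)) := by
  rw [h.x_succ n, H.dist_W_left (h.lam_mem n)]

theorem dist_x_succ_T (h : IsTikhonovMann H C T p u lam beta x y) (n : ℕ) :
    dist (x (n + 1)) (T (y n)) = (1 - lam n) * dist (y n) (T (y n)) := by
  rw [h.x_succ n, H.dist_W_right (h.lam_mem n)]

theorem dist_y_succ_le (h : IsTikhonovMann H C T p u lam beta x y) (n : ℕ) :
    dist (y (n + 1)) (y n) ≤
      |beta (n + 1) - beta n| * dist u (x (n + 1)) + beta n * dist (x (n + 1)) (x n) := by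
  rw [h.y_eq, h.y_eq]
  simpa using H.dist_W_W_le (a := u) (a' := u) (h.beta_mem (n + 1)) (h.beta_mem n)

theorem dist_x_succ_succ_le (h : IsTikhonovMann H C T p u lam beta x y)
    (hx0 : dist (x 0) p ≤ r) (hu : dist u p ≤ r) (n : ℕ) :
    dist (x (n + 2)) (x (n + 1)) ≤ beta n * dist (x (n + 1)) (x n) +
      2 * r * (|beta (n + 1) - beta n| + |lam (n + 1) - lam n|) := by
  have hW := H.dist_W_W_le (a := y (n + 1)) (b := T (y (n + 1))) (a' := y n) (b' := T (y n))
    (h.lam_mem (n + 1)) (h.lam_mem n)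
  rw [← h.x_succ n, ← h.x_succ (n + 1)] at hW
  have hl := h.lam_mem n
  calc dist (x (n + 2)) (x (n + 1))
      ≤ |lam (n + 1) - lam n| * dist (y (n + 1)) (T (y (n + 1))) +
          ((1 - lam n) * dist (y (n + 1)) (y n) + lam n * dist (T (y (n + 1))) (T (y n))) := hW
    _ ≤ |lam (n + 1) - lam n| * (2 * r) +
          ((1 - lam n) * dist (y (n + 1)) (y n) + lam n * dist (y (n + 1)) (y n)) := by
        gcongr
        · exact h.dist_y_T_le hx0 hu (n + 1)
        · exact hl.1
        · exact h.nonexpansive _ (h.y_mem (n + 1)) _ (h.y_mem n)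
    _ ≤ |lam (n + 1) - lam n| * (2 * r) +
          (|beta (n + 1) - beta n| * (2 * r) + beta n * dist (x (n + 1)) (x n)) := by
        have hy := h.dist_y_succ_le n
        have hux := h.dist_u_x_le hx0 hu (n + 1)
        have : |beta (n + 1) - beta n| * dist u (x (n + 1)) ≤ |beta (n + 1) - beta n| * (2 * r) :=
          mul_le_mul_of_nonneg_left hux (abs_nonneg _)
        linarith
    _ = _ := by ring

theorem lam_mul_dist_T_le (h : IsTikhonovMann H C T p u lam beta x y) (n : ℕ) :
    lam n * dist (x n) (T (x n)) ≤ dist (x (n + 1)) (x n) + dist (x n) (y n) := by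
  set A := dist (x (n + 1)) (x n)
  set E := dist (x n) (y n)
  set D := dist (y n) (T (y n))
  have hl := h.lam_mem n
  have hT : dist (x n) (T (x n)) ≤ A + (1 - lam n) * D + E :=
    calc dist (x n) (T (x n))
        ≤ dist (x n) (x (n + 1)) + dist (x (n + 1)) (T (y n)) + dist (T (y n)) (T (x n)) :=
          dist_triangle4 _ _ _ _
      _ ≤ A + (1 - lam n) * D + E := by
          rw [dist_comm (x n), h.dist_x_succ_T]
          gcongr
          exact (h.nonexpansive _ (h.y_mem n) _ (h.x_mem n)).trans_eq (dist_comm _ _)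
  -- `λ_n D = d(x_{n+1}, y_n)` lets the `(1 - λ_n) D` term be absorbed
  have hD : lam n * D ≤ A + E := h.dist_x_succ_y n ▸ dist_triangle _ _ _
  calc lam n * dist (x n) (T (x n)) ≤ lam n * (A + (1 - lam n) * D + E) := by gcongr; exact hl.1
    _ = lam n * A + (1 - lam n) * (lam n * D) + lam n * E := by ring
    _ ≤ lam n * A + (1 - lam n) * (A + E) + lam n * E := by gcongr; linarith [hl.2]
    _ = A + E := by ring

theorem dist_succ_le {K : ℕ} {σ₁ σ₃ σ₄ : ℕ → ℕ} (h : IsTikhonovMann H C T p u lam beta x y)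
    (hx0 : dist (x 0) p ≤ K) (hu : dist u p ≤ K) (hK : 0 < K)
    (hσ₁ : IsRateOfDivergence (fun n ↦ 1 - beta n) σ₁)
    (hσ₃ : IsCauchyModulus (fun n ↦ |beta (n + 1) - beta n|) σ₃)
    (hσ₄ : IsCauchyModulus (fun n ↦ |lam (n + 1) - lam n|) σ₄) {k n : ℕ}
    (hn : asymptoticRegularityRate K σ₁ σ₃ σ₄ k ≤ n) :
    dist (x (n + 1)) (x n) ≤ 1 / (k + 1) :=
  le_of_asymptoticRegularityRate_le (a := fun n ↦ dist (x (n + 1)) (x n)) hK h.beta_mem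
    (fun _ ↦ abs_nonneg _) (fun _ ↦ abs_nonneg _) (fun _ ↦ h.dist_x_x_le hx0 hu _ _)
    (h.dist_x_succ_succ_le hx0 hu) hσ₁ hσ₃ hσ₄ hn

end IsTikhonovMann

theorem tm_T_as_reg_C1q
    {X : Type*} [MetricSpace X] (H : WHyp X) (C : Set X)
    (hCconv : ∀ x ∈ C, ∀ y ∈ C, ∀ l ∈ Set.Icc (0:ℝ) 1, H.W x y l ∈ C)
    (T : X → X) (hTmaps : ∀ x ∈ C, T x ∈ C)
    (hTne : ∀ x ∈ C, ∀ y ∈ C, dist (T x) (T y) ≤ dist x y)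
    (p : X) (hpC : p ∈ C) (hpfix : T p = p)
    (u : X) (huC : u ∈ C)
    (lam beta : ℕ → ℝ)
    (hlam : ∀ n, lam n ∈ Set.Icc (0:ℝ) 1) (hbeta : ∀ n, beta n ∈ Set.Icc (0:ℝ) 1)
    (x y : ℕ → X) (hx0 : x 0 ∈ C)
    (hy : ∀ n, y n = H.W u (x n) (beta n))
    (hx : ∀ n, x (n + 1) = H.W (y n) (T (y n)) (lam n))
    (M : ℝ) (hM : M = max (dist (x 0) p) (dist u p))
    (σ₁ σ₃ σ₄ σ₅ : ℕ → ℕ)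
    (hσ₁ : ∀ n : ℕ, (n : ℝ) ≤ ∑ i ∈ Finset.range (σ₁ n + 1), (1 - beta i))
    (hσ₃ : ∀ k : ℕ, ∀ n ≥ σ₃ k, ∀ q : ℕ,
      ∑ i ∈ Finset.Icc (n + 1) (n + q), |beta (i + 1) - beta i| ≤ 1 / (k + 1))
    (hσ₄ : ∀ k : ℕ, ∀ n ≥ σ₄ k, ∀ q : ℕ,
      ∑ i ∈ Finset.Icc (n + 1) (n + q), |lam (i + 1) - lam i| ≤ 1 / (k + 1))
    (K : ℕ) (hK : M ≤ (K : ℝ))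
    (hσ₅ : ∀ k : ℕ, ∀ n ≥ σ₅ k, |beta n - 1| ≤ 1 / (k + 1))
    (Λ : ℕ) (hΛ : 1 ≤ Λ) (NΛ : ℕ)
    (hNΛ : ∀ n ≥ NΛ, 1 / (Λ : ℝ) ≤ lam n)
    (χ : ℕ → ℕ)
    (hχ : ∀ k : ℕ, χ k = max (σ₃ (8 * K * (k + 1) - 1)) (σ₄ (8 * K * (k + 1) - 1)))
    (Sg : ℕ → ℕ)
    (hSg : ∀ k : ℕ,
      Sg k = σ₁ (χ (3 * k + 2) + 2 + ⌈Real.log (6 * K * (k + 1))⌉₊) + 1)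
    (Φ : ℕ → ℕ)
    (hΦ : ∀ k : ℕ,
      Φ k = max NΛ (max (Sg (2 * Λ * (k + 1) - 1)) (σ₅ (4 * K * Λ * (k + 1) - 1)))) :
    ∀ k : ℕ, ∀ n ≥ Φ k, dist (x n) (T (x n)) ≤ 1 / (k + 1) := by
  have h : IsTikhonovMann H C T p u lam beta x y :=
    ⟨hCconv, hTmaps, hTne, hpC, hpfix, huC, hlam, hbeta, hx0, hy, hx⟩
  have hx0K : dist (x 0) p ≤ K := (hM ▸ le_max_left _ _ : dist (x 0) p ≤ M).trans hK
  have huK : dist u p ≤ K := (hM ▸ le_max_right _ _ : dist u p ≤ M).trans hK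
  obtain rfl : χ = perturbationModulus K σ₃ σ₄ := funext hχ
  obtain rfl : Sg = asymptoticRegularityRate K σ₁ σ₃ σ₄ := funext hSg
  intro k n hn
  rcases K.eq_zero_or_pos with rfl | hKpos
  · have hxp : x n = p := dist_le_zero.1 (by simpa using h.dist_x_le hx0K huK n)
    rw [hxp, hpfix, dist_self]
    positivity
  rw [hΦ k, ge_iff_le, max_le_iff, max_le_iff] at hn
  obtain ⟨hnN, hnS, hn5⟩ := hn
  have hΛ₀ : (0 : ℝ) < Λ := by exact_mod_cast hΛ
  have hreg : dist (x (n + 1)) (x n) ≤ 1 / (2 * Λ * (k + 1)) := by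
    have := h.dist_succ_le hx0K huK hKpos hσ₁ hσ₃ hσ₄ hnS
    rw [cast_sub_one_add_one (by positivity)] at this
    exact_mod_cast this
  have hxy : dist (x n) (y n) ≤ 1 / (2 * Λ * (k + 1)) :=
    calc dist (x n) (y n) ≤ |beta n - 1| * (2 * K) := h.dist_x_y_le hx0K huK n
      _ ≤ 1 / (((4 * K * Λ * (k + 1) - 1 : ℕ) : ℝ) + 1) * (2 * K) := by gcongr; exact hσ₅ _ n hn5
      _ = 1 / (2 * Λ * (k + 1)) := by
        rw [cast_sub_one_add_one (by positivity)]; push_cast; field_simp; ring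
  have hΛlam : 1 ≤ Λ * lam n := by rw [← div_le_iff₀' hΛ₀]; exact hNΛ n hnN
  calc dist (x n) (T (x n)) ≤ Λ * (lam n * dist (x n) (T (x n))) := by
        rw [← mul_assoc]; exact le_mul_of_one_le_left dist_nonneg hΛlam
    _ ≤ Λ * (1 / (2 * Λ * (k + 1)) + 1 / (2 * Λ * (k + 1))) := by
        gcongr; exact (h.lam_mul_dist_T_le n).trans (add_le_add hreg hxy)
    _ = 1 / (k + 1) := by field_simp; ring
end

section
/- (Quadratic rate of T-asymptotic regularity) In the Tikhonov-Mann setting, let λ ∈ (0,1] and take λ_n = λ and β_n = 1 − 1/(n+1) for every n ∈ ℕ, and let K ∈ ℕ satisfy K ≥ M. Then Φ₀(k) = 576K²⌈1/λ⌉²(k+1)² + 12K⌈1/λ⌉(k+1) is a rate of T-asymptotic regularity for (x_n), i.e., d(x_n,Tx_n) ≤ 1/(k+1) for all k ∈ ℕ and all n ≥ Φ₀(k). -/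
/-!
Write `a n = d(x n, x (n+1))`. For constant `λ` the step `z ↦ (1-λ)z + λTz` is nonexpansive, so
`a (n+1) ≤ d(y n, y (n+1)) ≤ β n * a n + |β n - β (n+1)| * d(u, x (n+1))`. With `β n = n/(n+1)`
this reads `(n+1) a (n+1) ≤ n a n + 2M/(n+2)`, and summing against
`1/(m+2) ≤ 2(√(m+2) - √(m+1))` gives `n a n ≤ 4M√(n+1)`. Since moreover
`d(x n, y n) ≤ 2M/(n+1)` and `λ d(y n, T y n) ≤ d(x n, y n) + a n`, nonexpansiveness yields
`d(x n, T x n) ≤ (2 + 1/λ) 2M/(n+1) + (1/λ) 4M√(n+1)/n`, which is at most `1/(k+1)` from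
`Φ₀(k)` on. All bounds by `M` hold because the iterates never leave the convex, `T`-invariant
set `C ∩ B̄(p, M)`.
-/

open Metric Set

theorem one_div_le_two_mul_sqrt_sub {t : ℝ} (ht : 0 ≤ t) :
    1 / (t + 1) ≤ 2 * (√(t + 1) - √t) := by
  have hs := Real.sq_sqrt (by linarith : 0 ≤ t + 1)
  have ht' := Real.sq_sqrt ht
  have hts : √t ≤ √(t + 1) := Real.sqrt_le_sqrt (by linarith)
  have hs1 : 1 ≤ √(t + 1) := Real.one_le_sqrt.2 (by linarith)
  rw [div_le_iff₀ (by linarith)]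
  nlinarith [mul_nonneg (sub_nonneg.2 hts)
      (mul_nonneg (Real.sqrt_nonneg (t + 1)) (sub_nonneg.2 hs1)), sq_nonneg (√(t + 1) - √t)]

theorem le_two_mul_sqrt_of_le_add {b : ℕ → ℝ} {c : ℝ} (hc : 0 ≤ c) (h0 : b 0 ≤ 0)
    (h : ∀ m : ℕ, b (m + 1) ≤ b m + c / (m + 2)) (n : ℕ) : b n ≤ 2 * c * √(n + 1) := by
  induction n with
  | zero => simpa using h0.trans (by positivity)
  | succ n ih =>
    have step := mul_le_mul_of_nonneg_left
      (one_div_le_two_mul_sqrt_sub (t := (n : ℝ) + 1) (by positivity)) hc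
    have hcn : c / (n + 2) = c * (1 / (n + 1 + 1)) := by ring
    push_cast
    linarith [h n]

theorem sqrt_succ_le_div {B t : ℝ} (hB : 1 ≤ B) (ht : 2 * B ^ 2 ≤ t) : √(t + 1) ≤ t / B := by
  have hB2 : 1 ≤ B ^ 2 := one_le_pow₀ hB
  have ht0 : 0 ≤ t := by linarith
  rw [Real.sqrt_le_left (by positivity), div_pow, le_div_iff₀ (by positivity)]
  nlinarith [mul_le_mul_of_nonneg_right ht ht0, mul_nonneg (sq_nonneg B) (by linarith : 0 ≤ t - 1)]

theorem mul_le_two_mul_sqrt_of_le {a beta : ℕ → ℝ} {c : ℝ} (hc : 0 ≤ c)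
    (hbeta : ∀ n : ℕ, beta n = 1 - 1 / (n + 1))
    (h : ∀ m, a (m + 1) ≤ beta m * a m + |beta m - beta (m + 1)| * c) (n : ℕ) :
    n * a n ≤ 2 * c * √(n + 1) := by
  refine le_two_mul_sqrt_of_le_add (b := fun m => m * a m) hc (by simp) (fun m => ?_) n
  have hb : (m + 1 : ℝ) * beta m = m := by
    rw [hbeta]; field_simp; ring
  have hd : (m + 1 : ℝ) * |beta m - beta (m + 1)| = 1 / (m + 2) := by
    have : beta m - beta (m + 1) = -(1 / ((m + 1) * (m + 2))) := by
      rw [hbeta, hbeta]; push_cast; field_simp; ring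
    rw [this, abs_neg, abs_of_nonneg (by positivity)]
    field_simp
  calc ((m + 1 : ℕ) : ℝ) * a (m + 1)
      ≤ (m + 1) * (beta m * a m + |beta m - beta (m + 1)| * c) := by push_cast; gcongr; exact h m
    _ = m * a m + c / (m + 2) := by rw [mul_add, ← mul_assoc, ← mul_assoc, hb, hd]; ring

theorem add_mul_le_of_quadratic_le {K c k n A D : ℝ} (hK : 1 ≤ K) (hc : 1 ≤ c) (hk : 0 ≤ k)
    (hn : 576 * K ^ 2 * c ^ 2 * (k + 1) ^ 2 ≤ n)
    (hA : n * A ≤ 4 * K * √(n + 1)) (hD : D ≤ 2 * K / (n + 1)) :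
    (2 + c) * D + c * A ≤ 1 / (k + 1) := by
  set B := 6 * K * c * (k + 1) with hB
  have hB1 : 1 ≤ B := by
    have : 1 ≤ K * c := one_le_mul_of_one_le_of_one_le hK hc
    nlinarith
  have hnB : 16 * B ^ 2 ≤ n := by linarith
  have hn0 : 0 < n := by nlinarith
  have hk1 : 1 / (k + 1) = 6 * K * c / B := by rw [hB]; field_simp
  have hcA : c * A ≤ 4 * K * c / B := by
    have hsq := sqrt_succ_le_div hB1 (by linarith : 2 * B ^ 2 ≤ n)
    refine le_of_mul_le_mul_left ?_ hn0
    calc n * (c * A) = c * (n * A) := by ring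
      _ ≤ c * (4 * K * (n / B)) := mul_le_mul_of_nonneg_left (hA.trans (by gcongr)) (by linarith)
      _ = n * (4 * K * c / B) := by ring
  have hcD : (2 + c) * D ≤ 2 * K * c / B := by
    calc (2 + c) * D ≤ 3 * c * (2 * K / (n + 1)) := by
          refine (mul_le_mul_of_nonneg_left hD (by linarith)).trans ?_
          gcongr
          linarith
      _ ≤ 2 * K * c / B := by
          rw [mul_div_assoc', div_le_div_iff₀ (by positivity) (by positivity)]
          nlinarith
  rw [hk1]
  linarith [show 6 * K * c / B = 4 * K * c / B + 2 * K * c / B by ring]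

theorem mapsTo_inter_closedBall_of_isFixedPt {X : Type*} [MetricSpace X] {C : Set X} {T : X → X}
    (hTC : ∀ x ∈ C, T x ∈ C) (hT : ∀ x ∈ C, ∀ y ∈ C, dist (T x) (T y) ≤ dist x y)
    {p : X} (hp : p ∈ C) (hTp : T p = p)
    (r : ℝ) : ∀ z ∈ C ∩ closedBall p r, T z ∈ C ∩ closedBall p r := fun z hz =>
  ⟨hTC z hz.1, by rw [mem_closedBall, ← hTp]; exact (hT z hz.1 p hp).trans hz.2⟩

namespace WHyp

variable {X : Type*} [MetricSpace X] (H : WHyp X)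

def IsConvex (D : Set X) : Prop :=
  ∀ x ∈ D, ∀ y ∈ D, ∀ l ∈ Icc (0 : ℝ) 1, H.W x y l ∈ D

variable {H} in
theorem IsConvex.inter {D E : Set X} (hD : H.IsConvex D) (hE : H.IsConvex E) :
    H.IsConvex (D ∩ E) :=
  fun x hx y hy l hl => ⟨hD x hx.1 y hy.1 l hl, hE x hx.2 y hy.2 l hl⟩

theorem isConvex_closedBall (p : X) (r : ℝ) : H.IsConvex (closedBall p r) := by
  intro x hx y hy l hl
  rw [mem_closedBall, dist_comm] at *
  have ⟨hl0, hl1⟩ := hl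
  calc dist p (H.W x y l) ≤ (1 - l) * dist p x + l * dist p y := H.W1 x y p l hl
    _ ≤ (1 - l) * r + l * r := by gcongr
    _ = r := by ring

theorem dist_W_right_le (x y : X) {l : ℝ} (hl : l ∈ Icc (0 : ℝ) 1) :
    dist y (H.W x y l) ≤ (1 - l) * dist x y := by
  simpa [dist_comm] using H.W1 x y y l hl

theorem mul_dist_le_dist_W (x y : X) {l : ℝ} (hl : l ∈ Icc (0 : ℝ) 1) :
    l * dist x y ≤ dist x (H.W x y l) := by
  linarith [H.dist_W_right_le x y hl, dist_triangle_right x y (H.W x y l)]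

theorem dist_W_W_le_s16 (u x y : X) {a b : ℝ} (ha : a ∈ Icc (0 : ℝ) 1) (hb : b ∈ Icc (0 : ℝ) 1) :
    dist (H.W u x a) (H.W u y b) ≤ a * dist x y + |a - b| * dist u y := by
  have hW4 := H.W4 u u x y a ha
  rw [dist_self, mul_zero, zero_add] at hW4
  calc dist (H.W u x a) (H.W u y b)
      ≤ dist (H.W u x a) (H.W u y a) + dist (H.W u y a) (H.W u y b) := dist_triangle _ _ _
    _ ≤ a * dist x y + |a - b| * dist u y := add_le_add hW4 (H.W2 u y a ha b hb).le

theorem dist_W_map_le {C : Set X} {T : X → X}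
    (hT : ∀ x ∈ C, ∀ y ∈ C, dist (T x) (T y) ≤ dist x y) {x y : X} (hx : x ∈ C) (hy : y ∈ C)
    {l : ℝ} (hl : l ∈ Icc (0 : ℝ) 1) :
    dist (H.W x (T x) l) (H.W y (T y) l) ≤ dist x y := by
  have := hl.1
  calc dist (H.W x (T x) l) (H.W y (T y) l) ≤ (1 - l) * dist x y + l * dist (T x) (T y) :=
        H.W4 x y (T x) (T y) l hl
    _ ≤ (1 - l) * dist x y + l * dist x y := by gcongr; exact hT x hx y hy
    _ = dist x y := by ring

theorem dist_map_le {C : Set X} {T : X → X}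
    (hT : ∀ x ∈ C, ∀ y ∈ C, dist (T x) (T y) ≤ dist x y) {x y : X} (hx : x ∈ C) (hy : y ∈ C)
    {l : ℝ} (hl : l ∈ Ioc (0 : ℝ) 1) :
    dist x (T x) ≤ (2 + 1 / l) * dist x y + 1 / l * dist x (H.W y (T y) l) := by
  have hl0 := hl.1
  have hTy : l * dist y (T y) ≤ dist x y + dist x (H.W y (T y) l) := by
    have := H.mul_dist_le_dist_W y (T y) (Ioc_subset_Icc_self hl)
    linarith [dist_triangle_left y (H.W y (T y) l) x]
  have hTy' : dist y (T y) ≤ 1 / l * (dist x y + dist x (H.W y (T y) l)) := by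
    rw [one_div, ← div_eq_inv_mul, le_div_iff₀ hl0, mul_comm]; exact hTy
  have hTxy := hT y hy x hx
  rw [dist_comm y x] at hTxy
  linarith [dist_triangle4 x y (T y) (T x)]

theorem iterate_mem {D : Set X} (hD : H.IsConvex D) {T : X → X} (hT : ∀ z ∈ D, T z ∈ D)
    {u : X} (hu : u ∈ D) {lam beta : ℕ → ℝ} (hlam : ∀ n, lam n ∈ Icc (0 : ℝ) 1)
    (hbeta : ∀ n, beta n ∈ Icc (0 : ℝ) 1) {x y : ℕ → X} (hx0 : x 0 ∈ D)
    (hy : ∀ n, y n = H.W u (x n) (beta n)) (hx : ∀ n, x (n + 1) = H.W (y n) (T (y n)) (lam n))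
    (n : ℕ) : x n ∈ D ∧ y n ∈ D := by
  have hyD : ∀ n, x n ∈ D → y n ∈ D := fun n hxn => hy n ▸ hD u hu (x n) hxn _ (hbeta n)
  induction n with
  | zero => exact ⟨hx0, hyD 0 hx0⟩
  | succ n ih =>
    have hxn : x (n + 1) ∈ D := hx n ▸ hD _ ih.2 _ (hT _ ih.2) _ (hlam n)
    exact ⟨hxn, hyD _ hxn⟩

theorem dist_succ_succ_le {C : Set X} {T : X → X}
    (hT : ∀ x ∈ C, ∀ y ∈ C, dist (T x) (T y) ≤ dist x y) {u : X} {l : ℝ}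
    (hl : l ∈ Icc (0 : ℝ) 1) {beta : ℕ → ℝ} (hbeta : ∀ n, beta n ∈ Icc (0 : ℝ) 1)
    {x y : ℕ → X} (hyC : ∀ n, y n ∈ C) (hy : ∀ n, y n = H.W u (x n) (beta n))
    (hx : ∀ n, x (n + 1) = H.W (y n) (T (y n)) l) (n : ℕ) :
    dist (x (n + 1)) (x (n + 2)) ≤
      beta n * dist (x n) (x (n + 1)) + |beta n - beta (n + 1)| * dist u (x (n + 1)) :=
  calc dist (x (n + 1)) (x (n + 2)) ≤ dist (y n) (y (n + 1)) := by
        rw [hx n, hx (n + 1)]; exact H.dist_W_map_le hT (hyC n) (hyC (n + 1)) hl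
    _ ≤ _ := by rw [hy n, hy (n + 1)]; exact H.dist_W_W_le_s16 u _ _ (hbeta n) (hbeta (n + 1))

theorem mul_dist_succ_le {C : Set X} {T : X → X}
    (hT : ∀ x ∈ C, ∀ y ∈ C, dist (T x) (T y) ≤ dist x y) {u : X} {l : ℝ}
    (hl : l ∈ Icc (0 : ℝ) 1) {beta : ℕ → ℝ} (hbeta : ∀ n : ℕ, beta n = 1 - 1 / (n + 1))
    {x y : ℕ → X} (hyC : ∀ n, y n ∈ C) (hy : ∀ n, y n = H.W u (x n) (beta n))
    (hx : ∀ n, x (n + 1) = H.W (y n) (T (y n)) l) {r : ℝ} (hr : 0 ≤ r)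
    (hu : ∀ n, dist u (x n) ≤ r) (n : ℕ) :
    n * dist (x n) (x (n + 1)) ≤ 2 * r * √(n + 1) := by
  have hbeta_mem : ∀ n, beta n ∈ Icc (0 : ℝ) 1 := fun n => by
    rw [hbeta]
    exact ⟨sub_nonneg.2 (div_le_one_of_le₀ (by simp) (by positivity)),
      sub_le_self _ (by positivity)⟩
  refine mul_le_two_mul_sqrt_of_le (a := fun m => dist (x m) (x (m + 1))) hr hbeta (fun m => ?_) n
  exact (H.dist_succ_succ_le hT hl hbeta_mem hyC hy hx m).trans (by gcongr; exact hu _)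

end WHyp

theorem tm_quadratic_T_as_reg
    {X : Type*} [MetricSpace X] (H : WHyp X) (C : Set X)
    (hCconv : ∀ x ∈ C, ∀ y ∈ C, ∀ l ∈ Set.Icc (0:ℝ) 1, H.W x y l ∈ C)
    (T : X → X) (hTmaps : ∀ x ∈ C, T x ∈ C)
    (hTne : ∀ x ∈ C, ∀ y ∈ C, dist (T x) (T y) ≤ dist x y)
    (p : X) (hpC : p ∈ C) (hpfix : T p = p)
    (u : X) (huC : u ∈ C)
    (lam beta : ℕ → ℝ)
    (hlam : ∀ n, lam n ∈ Set.Icc (0:ℝ) 1) (hbeta : ∀ n, beta n ∈ Set.Icc (0:ℝ) 1)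
    (x y : ℕ → X) (hx0 : x 0 ∈ C)
    (hy : ∀ n, y n = H.W u (x n) (beta n))
    (hx : ∀ n, x (n + 1) = H.W (y n) (T (y n)) (lam n))
    (M : ℝ) (hM : M = max (dist (x 0) p) (dist u p))
    (l : ℝ) (hl : l ∈ Set.Ioc (0:ℝ) 1)
    (hlamconst : ∀ n, lam n = l)
    (hbetaval : ∀ n : ℕ, beta n = 1 - 1 / (n + 1))
    (K : ℕ) (hK : M ≤ (K : ℝ)) :
    ∀ k : ℕ, ∀ n ≥ 576 * K ^ 2 * ⌈1 / l⌉₊ ^ 2 * (k + 1) ^ 2 + 12 * K * ⌈1 / l⌉₊ * (k + 1),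
      dist (x n) (T (x n)) ≤ 1 / (k + 1) := by
  intro k n hn
  have hx' : ∀ n, x (n + 1) = H.W (y n) (T (y n)) l := fun n => hlamconst n ▸ hx n
  have hu : u ∈ C ∩ closedBall p M := ⟨huC, by rw [mem_closedBall, hM]; exact le_max_right _ _⟩
  have hD : ∀ m, (x m ∈ C ∩ closedBall p M) ∧ y m ∈ C ∩ closedBall p M :=
    H.iterate_mem (WHyp.IsConvex.inter (H := H) hCconv (H.isConvex_closedBall p M))
      (mapsTo_inter_closedBall_of_isFixedPt hTmaps hTne hpC hpfix M) hu hlam hbeta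
      ⟨hx0, by rw [mem_closedBall, hM]; exact le_max_left _ _⟩ hy hx
  have hux : ∀ m, dist u (x m) ≤ 2 * K := fun m =>
    (dist_triangle_right u (x m) p).trans
      (by linarith [mem_closedBall.1 hu.2, mem_closedBall.1 (hD m).1.2])
  rcases K.eq_zero_or_pos with rfl | hK0
  · have hxp : x n = p := dist_le_zero.1 ((mem_closedBall.1 (hD n).1.2).trans (by simpa using hK))
    rw [hxp, hpfix, dist_self]
    positivity
  have hA : n * dist (x n) (x (n + 1)) ≤ 2 * (2 * K) * √(n + 1) :=
    H.mul_dist_succ_le hTne (Ioc_subset_Icc_self hl) hbetaval (fun m => (hD m).2.1) hy hx'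
      (by positivity) hux n
  have hxy : dist (x n) (y n) ≤ 2 * K / (n + 1) := by
    rw [hy n]
    refine (H.dist_W_right_le u (x n) (hbeta n)).trans ?_
    rw [hbetaval, sub_sub_cancel, one_div_mul_eq_div]
    gcongr
    exact hux n
  have hc : 1 / l ≤ ⌈1 / l⌉₊ := Nat.le_ceil _
  calc dist (x n) (T (x n))
      ≤ (2 + 1 / l) * dist (x n) (y n) + 1 / l * dist (x n) (x (n + 1)) :=
        hx' n ▸ H.dist_map_le hTne (hD n).1.1 (hD n).2.1 hl
    _ ≤ (2 + ⌈1 / l⌉₊) * dist (x n) (y n) + ⌈1 / l⌉₊ * dist (x n) (x (n + 1)) := by gcongr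
    _ ≤ 1 / (k + 1) := by
      have hn' : 576 * (K : ℝ) ^ 2 * (⌈1 / l⌉₊ : ℝ) ^ 2 * (k + 1) ^ 2 ≤ n := by
        exact_mod_cast (Nat.le_add_right _ _).trans hn
      exact add_mul_le_of_quadratic_le (by exact_mod_cast hK0)
        ((one_le_one_div hl.1 hl.2).trans hc) k.cast_nonneg hn'
        (by linarith) hxy
end
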